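/- Let B be a Banach algebra and A a closed subalgebra of B such that the projective tensor product A ⊗̂ B is weakly amenable. Then the closed linear span of {ab : a, b ∈ A} equals A, i.e., A² is dense in A. -/

import Mathlib

open Filter Topology MulOpposite

/-- A Banach `A`-bimodule structure on the Banach space `X`:
`L a x = a • x` (left action), `R a x = x • a` (right action),
given as continuous bilinear maps. -/
structure BanachBimodule (A X : Type*) [NonUnitalNormedRing A] [NormedSpace ℂ A]
    [NormedAddCommGroup X] [NormedSpace ℂ X] where
  L : A →L[ℂ] X →L[ℂ] X
  R : A →L[ℂ] X →L[ℂ] X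
  L_mul : ∀ a b : A, L (a * b) = (L a).comp (L b)
  R_mul : ∀ a b : A, R (a * b) = (R b).comp (R a)
  LR_comm : ∀ (a b : A) (x : X), R b (L a x) = L a (R b x)

/-- `D : A → X*` is a derivation into the dual Banach bimodule of `X`, written
pointwise: `D(ab) = a·D(b) + D(a)·b` where `(a·f)(x) = f(x·a)`, `(f·a)(x) = f(a·x)`. -/
def IsDualDerivation {A X : Type*} [NonUnitalNormedRing A] [NormedSpace ℂ A]
    [NormedAddCommGroup X] [NormedSpace ℂ X] (σ : BanachBimodule A X)
    (D : A →L[ℂ] (X →L[ℂ] ℂ)) : Prop :=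
  ∀ (a b : A) (x : X), D (a * b) x = D b (σ.R a x) + D a (σ.L b x)

/-- `D` is inner: `D a = a·f − f·a` for some `f ∈ X*`. -/
def IsInnerDualDerivation {A X : Type*} [NonUnitalNormedRing A] [NormedSpace ℂ A]
    [NormedAddCommGroup X] [NormedSpace ℂ X] (σ : BanachBimodule A X)
    (D : A →L[ℂ] (X →L[ℂ] ℂ)) : Prop :=
  ∃ f : X →L[ℂ] ℂ, ∀ (a : A) (x : X), D a x = f (σ.R a x) - f (σ.L a x)

/-- A Banach algebra is amenable if every continuous derivation into every dual
Banach bimodule is inner. -/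
def Amenable (A : Type*) [NonUnitalNormedRing A] [NormedSpace ℂ A] : Prop :=
  ∀ (X : Type) (_ : NormedAddCommGroup X) (_ : NormedSpace ℂ X) (_ : CompleteSpace X)
    (σ : BanachBimodule A X) (D : A →L[ℂ] (X →L[ℂ] ℂ)),
    IsDualDerivation σ D → IsInnerDualDerivation σ D

/-- Weak amenability: every continuous derivation `D : A → A*` into the dual
bimodule (`(a·f)(x) = f(xa)`, `(f·a)(x) = f(ax)`) is inner. -/
def WeaklyAmenable (A : Type*) [NonUnitalNormedRing A] [NormedSpace ℂ A] : Prop :=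
  ∀ D : A →L[ℂ] (A →L[ℂ] ℂ),
    (∀ a b x : A, D (a * b) x = D b (x * a) + D a (b * x)) →
    ∃ f : A →L[ℂ] ℂ, ∀ a x : A, D a x = f (x * a) - f (a * x)

/-- A bounded net in a normed space. -/
structure BddNet (X : Type*) [Norm X] where
  ι : Type
  [dir : SemilatticeSup ι]
  [ne : Nonempty ι]
  z : ι → X
  C : ℝ
  bdd : ∀ i, ‖z i‖ ≤ C

/-- The `atTop` filter of the (directed) index of a bounded net. -/
def BddNet.filter {X : Type*} [Norm X] (S : BddNet X) : Filter S.ι :=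
  letI := S.dir; Filter.atTop

/-- The bounded net `S` is a two-sided bounded approximate identity for `A`. -/
def IsBAI {A : Type*} [NonUnitalNormedRing A] (S : BddNet A) : Prop :=
  ∀ a : A, Tendsto (fun i => a * S.z i) S.filter (nhds a) ∧
           Tendsto (fun i => S.z i * a) S.filter (nhds a)

/-- `A` has a (two-sided) bounded approximate identity. -/
def HasBAI (A : Type*) [NonUnitalNormedRing A] : Prop := ∃ S : BddNet A, IsBAI S

/-- `T`, together with the continuous bilinear map `ι`, is (a realization of) the
projective tensor product `A ⊗̂ B` of the Banach algebras `A` and `B`: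
`ι` is multiplicative ((a⊗b)(c⊗d) = ac⊗bd), satisfies the cross-norm estimate,
has dense linear span, and has the universal (norm-decreasing lifting) property
of the projective tensor norm. -/
structure IsProjTensorProduct (A B T : Type*)
    [NonUnitalNormedRing A] [NormedSpace ℂ A] [NonUnitalNormedRing B] [NormedSpace ℂ B]
    [NonUnitalNormedRing T] [NormedSpace ℂ T] [CompleteSpace T] where
  ι : A →L[ℂ] B →L[ℂ] T
  norm_ι : ∀ a b, ‖ι a b‖ ≤ ‖a‖ * ‖b‖
  ι_mul : ∀ (a c : A) (b d : B), ι a b * ι c d = ι (a * c) (b * d)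
  dense_span : Dense (Submodule.span ℂ (Set.range fun p : A × B => ι p.1 p.2) : Set T)
  lift : ∀ (E : Type) (_ : NormedAddCommGroup E) (_ : NormedSpace ℂ E) (_ : CompleteSpace E)
    (φ : A →L[ℂ] B →L[ℂ] E), ∃ Φ : T →L[ℂ] E, (∀ a b, Φ (ι a b) = φ a b) ∧ ‖Φ‖ ≤ ‖φ‖


/-
If `A²` is not dense, a nonzero functional `f` on `A` kills all products. Tensoring it with any
functional `g` on `B` that is nonzero on `j A` gives a functional `μ = f ⊗ g` on `A ⊗̂ B` that kills
all products `(a ⊗ b)(c ⊗ d) = ac ⊗ bd`, hence (by density) all of `T²`. But then `t ↦ μ(t) μ` is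
a derivation `T → T*`, and it can only be inner if `μ(t)² = 0` for all `t`, i.e. `μ = 0`.
-/

theorem Submodule.exists_dual_ne_zero_of_not_dense {𝕜 E : Type*} [RCLike 𝕜]
    [NormedAddCommGroup E] [NormedSpace 𝕜 E] {p : Submodule 𝕜 E} (hp : ¬ Dense (p : Set E)) :
    ∃ f : StrongDual 𝕜 E, f ≠ 0 ∧ ∀ y ∈ p, f y = 0 := by
  set q := p.topologicalClosure
  have : IsClosed (q : Set E) := p.isClosed_topologicalClosure
  obtain ⟨x, hx⟩ : ∃ x, x ∉ q := by
    by_contra! h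
    exact hp (p.dense_iff_topologicalClosure_eq_top.mpr (eq_top_iff.mpr fun x _ => h x))
  have hx0 : q.mkQL x ≠ 0 := by simpa [Submodule.Quotient.mk_eq_zero] using hx
  obtain ⟨g, hg⟩ := SeparatingDual.exists_ne_zero (R := 𝕜) hx0
  refine ⟨g.comp q.mkQL, fun h => hg (by simpa using congr($h x)), fun y hy => ?_⟩
  have : q.mkQL y = 0 := by simpa using p.le_topologicalClosure hy
  simp [this]

theorem WeaklyAmenable.eq_zero_of_map_mul_eq_zero {T : Type*} [NonUnitalNormedRing T]
    [NormedSpace ℂ T] (hT : WeaklyAmenable T) {μ : StrongDual ℂ T}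
    (hμ : ∀ s t : T, μ (s * t) = 0) : μ = 0 := by
  obtain ⟨F, hF⟩ := hT (μ.smulRight μ) fun a b x => by simp [hμ]
  ext t
  simpa [sub_self] using hF t t

namespace IsProjTensorProduct

variable {A B T : Type*} [NonUnitalNormedRing A] [NormedSpace ℂ A] [NonUnitalNormedRing B]
  [NormedSpace ℂ B] [NonUnitalNormedRing T] [NormedSpace ℂ T] [CompleteSpace T]

theorem ext {E : Type*} [NormedAddCommGroup E] [NormedSpace ℂ E] (P : IsProjTensorProduct A B T)
    {φ ψ : T →L[ℂ] E} (h : ∀ a b, φ (P.ι a b) = ψ (P.ι a b)) : φ = ψ :=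
  ContinuousLinearMap.ext_on P.dense_span (by rintro _ ⟨⟨a, b⟩, rfl⟩; exact h a b)

theorem map_mul_eq_zero [IsScalarTower ℂ T T] [SMulCommClass ℂ T T]
    (P : IsProjTensorProduct A B T) {μ : StrongDual ℂ T}
    (hμ : ∀ a b c d, μ (P.ι a b * P.ι c d) = 0) (s t : T) : μ (s * t) = 0 := by
  have hleft : ∀ a b, μ ∘L ContinuousLinearMap.mul ℂ T (P.ι a b) = 0 := fun a b =>
    P.ext fun c d => hμ a b c d
  have hright : μ ∘L (ContinuousLinearMap.mul ℂ T).flip t = 0 :=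
    P.ext fun a b => congr($(hleft a b) t)
  exact congr($hright s)

end IsProjTensorProduct

theorem stmt10_general {A B T : Type*} [NonUnitalNormedRing A] [NormedSpace ℂ A] [NonUnitalNormedRing B] [NormedSpace ℂ B] [NonUnitalNormedRing T] [NormedSpace ℂ T] [IsScalarTower ℂ T T] [SMulCommClass ℂ T T] [CompleteSpace T]
    (j : A →L[ℂ] B) (hj_iso : ∀ a : A, ‖j a‖ = ‖a‖)
    (P : IsProjTensorProduct A B T) (hT : WeaklyAmenable T) :
    Dense (Submodule.span ℂ {x : A | ∃ a b : A, a * b = x} : Set A) := by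
  by_contra hnd
  obtain ⟨f, hf0, hf⟩ := Submodule.exists_dual_ne_zero_of_not_dense hnd
  have hf_mul (a b : A) : f (a * b) = 0 := hf _ (Submodule.subset_span ⟨a, b, rfl⟩)
  obtain ⟨a₀, ha₀⟩ := DFunLike.ne_iff.mp hf0
  have hja₀ : j a₀ ≠ 0 := by
    rw [← norm_ne_zero_iff, hj_iso, norm_ne_zero_iff]
    rintro rfl
    simp at ha₀
  obtain ⟨g, hg⟩ := SeparatingDual.exists_ne_zero (R := ℂ) hja₀
  obtain ⟨μ, hμ, -⟩ := P.lift ℂ inferInstance inferInstance inferInstance (f.smulRight g)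
  have hμ_mul : ∀ s t : T, μ (s * t) = 0 :=
    P.map_mul_eq_zero fun a b c d => by simp [P.ι_mul, hμ, hf_mul]
  have hμ_ne : μ (P.ι a₀ (j a₀)) ≠ 0 := by simpa [hμ] using ⟨ha₀, hg⟩
  exact hμ_ne (by rw [hT.eq_zero_of_map_mul_eq_zero hμ_mul]; rfl)

/-- if `A` is a closed subalgebra of `B` (encoded by an isometric
multiplicative embedding `j : A → B`) and `A ⊗̂ B` is weakly amenable, then
`A² = span{ab : a, b ∈ A}` is dense in `A`. -/
theorem stmt10 {A B T : Type*} [NonUnitalNormedRing A] [NormedSpace ℂ A] [IsScalarTower ℂ A A] [SMulCommClass ℂ A A] [CompleteSpace A] [NonUnitalNormedRing B] [NormedSpace ℂ B] [IsScalarTower ℂ B B] [SMulCommClass ℂ B B] [CompleteSpace B] [NonUnitalNormedRing T] [NormedSpace ℂ T] [IsScalarTower ℂ T T] [SMulCommClass ℂ T T] [CompleteSpace T]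
    (j : A →L[ℂ] B) (hj_iso : ∀ a : A, ‖j a‖ = ‖a‖)
    (hj_mul : ∀ a b : A, j (a * b) = j a * j b)
    (P : IsProjTensorProduct A B T) (hT : WeaklyAmenable T) :
    Dense (Submodule.span ℂ {x : A | ∃ a b : A, a * b = x} : Set A) :=
  stmt10_general j hj_iso P hT
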